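/- For all real numbers γ, β_p, β₁, β₂ and every function g : ℝ → ℝ, the disorder average of the two-replica overlap statistic under the correlated-disorder distribution coincides with its average under the i.i.d. Edwards–Anderson distribution with parameter γ: Σ_τ (Z_τ(γ)·exp(β_p·Σ_{e∈E} τ(e)) / ((2·cosh γ)^{N_B}·Z_τ(β_p))) · R_τ(g, β₁, β₂) = Σ_τ (Π_{e∈E} exp(γ·τ(e))/(2·cosh γ)) · R_τ(g, β₁, β₂), where R_τ(g, β₁, β₂) = (Σ_{S¹,S²} g((1/N)·Σ_{v∈V} S¹(v)·S²(v)) · exp(β₁·H_τ(S¹) + β₂·H_τ(S²))) / (Z_τ(β₁)·Z_τ(β₂)). In particular the left-hand side is independent of β_p. -/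
import Mathlib


open Finset

set_option maxHeartbeats 1000000

/-- Ising energy H_t(S), spins valued in the units of the integers, i.e. {-1, 1}. -/
noncomputable def isingH {V E : Type*} [Fintype E] (i j : E → V)
    (τ : E → ℤˣ) (S : V → ℤˣ) : ℝ :=
  ∑ e, ((τ e : ℤ) : ℝ) * ((S (i e) : ℤ) : ℝ) * ((S (j e) : ℤ) : ℝ)

/-- Partition function Z_t(b). -/
noncomputable def isingZ {V E : Type*} [Fintype V] [DecidableEq V] [Fintype E]
    (i j : E → V) (β : ℝ) (τ : E → ℤˣ) : ℝ :=
  ∑ S : V → ℤˣ, Real.exp (β * isingH i j τ S)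

/-- Two-replica overlap statistic R_t(g, b1, b2). -/
noncomputable def replicaR {V E : Type*} [Fintype V] [DecidableEq V] [Fintype E]
    (i j : E → V) (g : ℝ → ℝ) (β₁ β₂ : ℝ) (τ : E → ℤˣ) : ℝ :=
  (∑ S1 : V → ℤˣ, ∑ S2 : V → ℤˣ,
      g ((1 / (Fintype.card V : ℝ)) * ∑ v, ((S1 v : ℤ) : ℝ) * ((S2 v : ℤ) : ℝ)) *
        Real.exp (β₁ * isingH i j τ S1 + β₂ * isingH i j τ S2)) /
    (isingZ i j β₁ τ * isingZ i j β₂ τ)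

section Aux

variable {V E : Type*} [Fintype V] [DecidableEq V] [Fintype E]

set_option linter.unusedSectionVars false

lemma sq1 (u : ℤˣ) : ((u : ℤ) : ℝ) * ((u : ℤ) : ℝ) = 1 := by
  have h : (u : ℤ) * (u : ℤ) = 1 := by
    rw [← Units.val_mul, Int.units_mul_self u, Units.val_one]
  exact_mod_cast h

/-- Gauge transformation on disorder. -/
def gaugeT (i j : E → V) (σ : V → ℤˣ) (τ : E → ℤˣ) : E → ℤˣ :=
  fun e => σ (i e) * σ (j e) * τ e

lemma gauge_invol (i j : E → V) (σ : V → ℤˣ) :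
    Function.Involutive (gaugeT i j σ) := by
  intro τ
  funext e
  show σ (i e) * σ (j e) * (σ (i e) * σ (j e) * τ e) = τ e
  rw [← mul_assoc, Int.units_mul_self (σ (i e) * σ (j e)), one_mul]

/-- Gauge transformation on spins. -/
def spinMul (σ : V → ℤˣ) (S : V → ℤˣ) : V → ℤˣ := fun v => σ v * S v

lemma spin_invol (σ : V → ℤˣ) : Function.Involutive (spinMul σ) := by
  intro S
  funext v
  show σ v * (σ v * S v) = S v
  rw [← mul_assoc, Int.units_mul_self, one_mul]

lemma H_gauge (i j : E → V) (σ : V → ℤˣ) (τ : E → ℤˣ) (S : V → ℤˣ) :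
    isingH i j (gaugeT i j σ τ) S = isingH i j τ (spinMul σ S) := by
  unfold isingH gaugeT spinMul
  refine Finset.sum_congr rfl fun e _ => ?_
  push_cast
  ring

lemma Z_gauge (i j : E → V) (β : ℝ) (σ : V → ℤˣ) (τ : E → ℤˣ) :
    isingZ i j β (gaugeT i j σ τ) = isingZ i j β τ := by
  unfold isingZ
  rw [← Equiv.sum_comp (Function.Involutive.toPerm _ (spin_invol σ))
    (fun S => Real.exp (β * isingH i j τ S))]
  refine Finset.sum_congr rfl fun S _ => ?_
  rw [H_gauge]
  rfl

lemma overlap_gauge (σ S1 S2 : V → ℤˣ) :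
    ∑ v, ((spinMul σ S1 v : ℤ) : ℝ) * ((spinMul σ S2 v : ℤ) : ℝ)
      = ∑ v, ((S1 v : ℤ) : ℝ) * ((S2 v : ℤ) : ℝ) := by
  refine Finset.sum_congr rfl fun v _ => ?_
  unfold spinMul
  push_cast
  linear_combination ((S1 v : ℤ) : ℝ) * ((S2 v : ℤ) : ℝ) * sq1 (σ v)

lemma R_gauge (i j : E → V) (g : ℝ → ℝ) (β₁ β₂ : ℝ) (σ : V → ℤˣ) (τ : E → ℤˣ) :
    replicaR i j g β₁ β₂ (gaugeT i j σ τ) = replicaR i j g β₁ β₂ τ := by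
  unfold replicaR
  rw [Z_gauge, Z_gauge]
  congr 1
  refine Fintype.sum_equiv (Function.Involutive.toPerm _ (spin_invol σ)) _ _ fun S1 => ?_
  refine Fintype.sum_equiv (Function.Involutive.toPerm _ (spin_invol σ)) _ _ fun S2 => ?_
  simp only [Function.Involutive.coe_toPerm]
  rw [overlap_gauge, H_gauge, H_gauge]

lemma Z_pos (i j : E → V) (β : ℝ) (τ : E → ℤˣ) : 0 < isingZ i j β τ := by
  unfold isingZ
  exact Finset.sum_pos (fun S _ => Real.exp_pos _) ⟨fun _ => 1, Finset.mem_univ _⟩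

lemma H_at_self (i j : E → V) (τ : E → ℤˣ) (S : V → ℤˣ) :
    isingH i j (gaugeT i j S τ) S = ∑ e, ((τ e : ℤ) : ℝ) := by
  rw [H_gauge]
  unfold isingH
  refine Finset.sum_congr rfl fun e _ => ?_
  have h1 : spinMul S S (i e) = 1 := by
    show S (i e) * S (i e) = 1; exact Int.units_mul_self _
  have h2 : spinMul S S (j e) = 1 := by
    show S (j e) * S (j e) = 1; exact Int.units_mul_self _
  rw [h1, h2]
  norm_num

lemma sum_gauge (i j : E → V) (τ : E → ℤˣ) (S : V → ℤˣ) :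
    ∑ e, ((gaugeT i j S τ e : ℤ) : ℝ) = isingH i j τ S := by
  unfold isingH gaugeT
  refine Finset.sum_congr rfl fun e _ => ?_
  push_cast
  ring

end Aux

/-- the correlated-disorder average of the two-replica overlap statistic
equals its i.i.d. Edwards-Anderson average with parameter γ. -/
theorem stmt_5 {V E : Type*} [Fintype V] [DecidableEq V] [Fintype E] [DecidableEq E]
    (i j : E → V) (hij : ∀ e, i e ≠ j e)
    (γ βp β₁ β₂ : ℝ) (g : ℝ → ℝ) :
    ∑ τ : E → ℤˣ,
        (isingZ i j γ τ * Real.exp (βp * ∑ e, ((τ e : ℤ) : ℝ)) /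
          ((2 * Real.cosh γ) ^ (Fintype.card E) * isingZ i j βp τ)) *
          replicaR i j g β₁ β₂ τ
      = ∑ τ : E → ℤˣ,
          (∏ e, Real.exp (γ * ((τ e : ℤ) : ℝ)) / (2 * Real.cosh γ)) *
            replicaR i j g β₁ β₂ τ := by
  set D : ℝ := (2 * Real.cosh γ) ^ (Fintype.card E) with hD
  have hRHS : ∀ τ : E → ℤˣ,
      (∏ e, Real.exp (γ * ((τ e : ℤ) : ℝ)) / (2 * Real.cosh γ))
        = Real.exp (γ * ∑ e, ((τ e : ℤ) : ℝ)) / D := by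
    intro τ
    rw [Finset.prod_div_distrib, Finset.prod_const, ← Real.exp_sum, ← Finset.mul_sum,
      Finset.card_univ, hD]
  calc
    ∑ τ : E → ℤˣ,
        (isingZ i j γ τ * Real.exp (βp * ∑ e, ((τ e : ℤ) : ℝ)) /
          (D * isingZ i j βp τ)) * replicaR i j g β₁ β₂ τ
      = ∑ τ : E → ℤˣ, ∑ S : V → ℤˣ,
          Real.exp (γ * isingH i j τ S) * Real.exp (βp * ∑ e, ((τ e : ℤ) : ℝ)) /
            (D * isingZ i j βp τ) * replicaR i j g β₁ β₂ τ := by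
        refine Finset.sum_congr rfl fun τ _ => ?_
        rw [isingZ, Finset.sum_mul, Finset.sum_div, Finset.sum_mul]
    _ = ∑ S : V → ℤˣ, ∑ τ : E → ℤˣ,
          Real.exp (γ * isingH i j τ S) * Real.exp (βp * ∑ e, ((τ e : ℤ) : ℝ)) /
            (D * isingZ i j βp τ) * replicaR i j g β₁ β₂ τ := Finset.sum_comm
    _ = ∑ S : V → ℤˣ, ∑ τ : E → ℤˣ,
          Real.exp (γ * ∑ e, ((τ e : ℤ) : ℝ)) * Real.exp (βp * isingH i j τ S) /
            (D * isingZ i j βp τ) * replicaR i j g β₁ β₂ τ := by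
        refine Finset.sum_congr rfl fun S _ => ?_
        refine Fintype.sum_equiv (Function.Involutive.toPerm _ (gauge_invol i j S)) _ _
          fun τ => ?_
        simp only [Function.Involutive.coe_toPerm]
        rw [sum_gauge, H_at_self, Z_gauge, R_gauge]
    _ = ∑ τ : E → ℤˣ, ∑ S : V → ℤˣ,
          Real.exp (γ * ∑ e, ((τ e : ℤ) : ℝ)) * Real.exp (βp * isingH i j τ S) /
            (D * isingZ i j βp τ) * replicaR i j g β₁ β₂ τ := Finset.sum_comm
    _ = ∑ τ : E → ℤˣ,
          (∏ e, Real.exp (γ * ((τ e : ℤ) : ℝ)) / (2 * Real.cosh γ)) *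
            replicaR i j g β₁ β₂ τ := by
        refine Finset.sum_congr rfl fun τ _ => ?_
        rw [hRHS τ]
        have hZ : isingZ i j βp τ ≠ 0 := (Z_pos i j βp τ).ne'
        rw [← Finset.sum_mul, ← Finset.sum_div, ← Finset.mul_sum, ← isingZ]
        field_simp
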